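/- Let ∇ ⊂ ℝ⁴ be defined by x,y,z,w ≥ 0, 1-x-y ≥ 0, x+y-z ≥ 0, 1-x-y-w+z ≥ 0. For every positive integer n, the number of lattice points in n∇ equals C(n+4,4) + 3·C(n+3,4) + C(n+2,4) = (5n⁴ + 30n³ + 67n² + 66n + 24)/24. -/

import Mathlib

/-!
Writing `s = x + y`, a lattice point of `n • ∇` is a choice of `0 ≤ s ≤ n`, of `0 ≤ x ≤ s`
(then `y = s - x`), of `0 ≤ z ≤ s` and of `0 ≤ w ≤ n - s + z`. Hence the count is
`∑ₛ (s + 1) ∑_{z ≤ s} (n - s + z + 1) = ∑ₛ (s + 1)² (2n + 2 - s) / 2`, a polynomial sum that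
agrees with the binomial expression once `C(m, 4) = m(m-1)(m-2)(m-3)/24` is expanded.
-/

open Pointwise

def nabla : Set (ℝ × ℝ × ℝ × ℝ) :=
  {p : ℝ × ℝ × ℝ × ℝ |
    0 ≤ p.1 ∧
    0 ≤ p.2.1 ∧
    0 ≤ p.2.2.1 ∧
    0 ≤ p.2.2.2 ∧
    0 ≤ 1 - p.1 - p.2.1 ∧
    0 ≤ p.1 + p.2.1 - p.2.2.1 ∧
    0 ≤ 1 - p.1 - p.2.1 - p.2.2.2 + p.2.2.1}

open Finset

lemma mem_smul_nabla_iff {c : ℝ} (hc : 0 ≤ c) (x y z w : ℝ) :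
    (x, y, z, w) ∈ c • nabla ↔
      0 ≤ x ∧ 0 ≤ y ∧ 0 ≤ z ∧ 0 ≤ w ∧ x + y ≤ c ∧ z ≤ x + y ∧ x + y + w ≤ c + z := by
  rcases hc.eq_or_lt with rfl | hc
  · rw [Set.zero_smul_set ⟨0, by norm_num [nabla]⟩]
    simp only [Set.mem_zero, Prod.mk_eq_zero]
    constructor
    · rintro ⟨rfl, rfl, rfl, rfl⟩
      norm_num
    · rintro ⟨hx, hy, hz, hw, hxy, hzxy, hwxy⟩
      refine ⟨?_, ?_, ?_, ?_⟩ <;> linarith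
  · have hscale : ∀ t : ℝ, 0 ≤ c⁻¹ * t ↔ 0 ≤ t := fun t =>
      mul_nonneg_iff_of_pos_left (inv_pos.2 hc)
    rw [Set.mem_smul_set_iff_inv_smul_mem₀ hc.ne']
    have hone : (1 : ℝ) = c⁻¹ * c := (inv_mul_cancel₀ hc.ne').symm
    simp only [nabla, Set.mem_ofPred_eq, Prod.smul_mk, smul_eq_mul, hone,
      ← mul_sub, ← mul_add, hscale]
    constructor <;> rintro ⟨hx, hy, hz, hw, h₁, h₂, h₃⟩ <;>
      refine ⟨hx, hy, hz, hw, ?_, ?_, ?_⟩ <;> linarith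

def latticeParam (n : ℕ) : Finset (Σ _ : ℕ, Σ _ : ℕ, Σ _ : ℕ, ℕ) :=
  (range (n + 1)).sigma fun s => (range (s + 1)).sigma fun _ =>
    (range (s + 1)).sigma fun z => range (n - s + z + 1)

def toLatticePoint (p : Σ _ : ℕ, Σ _ : ℕ, Σ _ : ℕ, ℕ) : ℤ × ℤ × ℤ × ℤ :=
  (p.2.1, (p.1 : ℤ) - p.2.1, p.2.2.1, p.2.2.2)

lemma toLatticePoint_injective : Function.Injective toLatticePoint := by
  rintro ⟨s, x, z, w⟩ ⟨s', x', z', w'⟩ h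
  simp only [toLatticePoint, Prod.mk.injEq, Nat.cast_inj] at h
  obtain ⟨rfl, hs, rfl, rfl⟩ := h
  obtain rfl : s = s' := by omega
  rfl

lemma card_latticeParam (n : ℕ) :
    #(latticeParam n) = ∑ s ∈ range (n + 1), (s + 1) * ∑ z ∈ range (s + 1), (n - s + z + 1) := by
  simp [latticeParam, card_sigma]

lemma latticePoints_smul_nabla (n : ℕ) :
    {v : ℤ × ℤ × ℤ × ℤ | ((v.1 : ℝ), (v.2.1 : ℝ), (v.2.2.1 : ℝ), (v.2.2.2 : ℝ)) ∈ (n : ℝ) • nabla}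
      = toLatticePoint '' latticeParam n := by
  ext ⟨x, y, z, w⟩
  simp only [Set.mem_ofPred_eq, Set.mem_image, mem_coe, mem_smul_nabla_iff n.cast_nonneg]
  norm_cast
  constructor
  · rintro ⟨hx, hy, hz, hw, hxy, hzxy, hwxy⟩
    lift x to ℕ using hx
    lift y to ℕ using hy
    lift z to ℕ using hz
    lift w to ℕ using hw
    refine ⟨⟨x + y, x, z, w⟩, ?_, ?_⟩
    · simp only [latticeParam, mem_sigma, mem_range]
      omega
    · simp [toLatticePoint]
  · rintro ⟨⟨s, x, z, w⟩, hp, h⟩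
    simp only [latticeParam, mem_sigma, mem_range] at hp
    simp only [toLatticePoint, Prod.mk.injEq] at h
    omega

lemma sum_range_add_natCast (a : ℚ) (m : ℕ) :
    ∑ z ∈ range m, (a + z) = m * (2 * a + m - 1) / 2 := by
  induction m with
  | zero => simp
  | succ m ih => rw [sum_range_succ, ih]; push_cast; ring

lemma sum_range_succ_sq_mul_sub (c : ℚ) (m : ℕ) :
    ∑ s ∈ range m, ((s : ℚ) + 1) ^ 2 * (c - s)
      = m * (m + 1) * (2 * (2 * m + 1) * c - (m - 1) * (3 * m + 2)) / 12 := by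
  induction m with
  | zero => simp
  | succ m ih => rw [sum_range_succ, ih]; push_cast; ring

lemma cast_choose_four (m : ℕ) : (m.choose 4 : ℚ) = m * (m - 1) * (m - 2) * (m - 3) / 24 := by
  rw [Nat.cast_choose_eq_descPochhammer_div]
  simp [descPochhammer_succ_right]
  norm_num [Nat.factorial]

lemma cast_card_latticeParam (n : ℕ) :
    (#(latticeParam n) : ℚ) = (5 * n ^ 4 + 30 * n ^ 3 + 67 * n ^ 2 + 66 * n + 24) / 24 := by
  have hterm : ∀ s ∈ range (n + 1),
      (((s + 1) * ∑ z ∈ range (s + 1), (n - s + z + 1) : ℕ) : ℚ)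
        = ((s : ℚ) + 1) ^ 2 * (2 * (n + 1) - s) / 2 := by
    intro s hs
    push_cast [Nat.cast_sub (Nat.lt_succ_iff.1 (mem_range.1 hs))]
    simp_rw [add_right_comm _ _ (1 : ℚ)]
    rw [sum_range_add_natCast]
    push_cast
    ring
  rw [card_latticeParam, Nat.cast_sum, sum_congr rfl hterm, ← sum_div, sum_range_succ_sq_mul_sub]
  push_cast
  ring

lemma cast_choose_sum (n : ℕ) :
    ((n + 4).choose 4 + 3 * (n + 3).choose 4 + (n + 2).choose 4 : ℚ)
      = (5 * n ^ 4 + 30 * n ^ 3 + 67 * n ^ 2 + 66 * n + 24) / 24 := by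
  simp only [cast_choose_four]
  push_cast
  ring

theorem stmt11_general (n : ℕ) :
    {v : ℤ × ℤ × ℤ × ℤ | (((v.1 : ℝ), (v.2.1 : ℝ), (v.2.2.1 : ℝ), (v.2.2.2 : ℝ)) : ℝ × ℝ × ℝ × ℝ) ∈ (n : ℝ) • nabla}.ncard
        = Nat.choose (n + 4) 4 + 3 * Nat.choose (n + 3) 4 + Nat.choose (n + 2) 4 ∧
      ((Nat.choose (n + 4) 4 + 3 * Nat.choose (n + 3) 4 + Nat.choose (n + 2) 4 : ℚ))
        = (5 * (n : ℚ) ^ 4 + 30 * (n : ℚ) ^ 3 + 67 * (n : ℚ) ^ 2 + 66 * (n : ℚ) ^ 1 + 24) / 24 := by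
  rw [pow_one]
  refine ⟨?_, cast_choose_sum n⟩
  rw [latticePoints_smul_nabla, Set.ncard_image_of_injective _ toLatticePoint_injective,
    Set.ncard_coe_finset]
  exact_mod_cast (cast_card_latticeParam n).trans (cast_choose_sum n).symm

theorem stmt11 (n : ℕ) (hn : 0 < n) :
    {v : ℤ × ℤ × ℤ × ℤ | (((v.1 : ℝ), (v.2.1 : ℝ), (v.2.2.1 : ℝ), (v.2.2.2 : ℝ)) : ℝ × ℝ × ℝ × ℝ) ∈ (n : ℝ) • nabla}.ncard
        = Nat.choose (n + 4) 4 + 3 * Nat.choose (n + 3) 4 + Nat.choose (n + 2) 4 ∧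
      ((Nat.choose (n + 4) 4 + 3 * Nat.choose (n + 3) 4 + Nat.choose (n + 2) 4 : ℚ))
        = (5 * (n : ℚ) ^ 4 + 30 * (n : ℚ) ^ 3 + 67 * (n : ℚ) ^ 2 + 66 * (n : ℚ) ^ 1 + 24) / 24 :=
  stmt11_general n
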